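/- Let B be a Bratteli diagram with finitely many sources and let ℓ be the associated length function. Then for every ε > 0 there exists M ≥ 0 such that for every infinite path y ∈ X_B, the sum Σ ℓ(x,y)^{−2}, taken over all x ∈ X_B tail-equivalent to y with ℓ(x,y) > M, is at most ε. Equivalently, sup_{y∈X_B} Σ_{x ~ y, ℓ(x,y)>M} ℓ(x,y)^{−2} → 0 as M → ∞. -/

import Mathlib

/-!
Fix `y` and finitely many paths `x ≠ y` with `x ~ y` and `ℓ(x, y) ≤ j`; let `x₀` be one of them
with `k = k(x₀, y)` maximal. All of them agree with `y` from level `k` on, so each is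
determined by its initial segment from a source to level `k`; hence there are at most
`c_k = ℓ(x₀, y) ≤ j` of them. Thus the `n`-th smallest value of `ℓ(·, y)` is at least `n`, and the
values that exceed `K` contribute at most `K · K⁻² + ∑_{n > K} n⁻² ≤ 2 / K` to the sum,
uniformly in `y`.
-/

/-- A Bratteli diagram: nonempty finite vertex levels `V n` (`n ≥ 0`), finite edge
sets `E n` consisting of the edges from level `n` to level `n + 1`, with source and
target maps, such that every vertex emits at least one edge. -/
structure BratteliDiagram where
  V : ℕ → Type
  E : ℕ → Type
  vFinite : ∀ n, Finite (V n)
  vNonempty : ∀ n, Nonempty (V n)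
  eFinite : ∀ n, Finite (E n)
  src : ∀ n, E n → V n
  tgt : ∀ n, E n → V (n + 1)
  src_surjective : ∀ n, Function.Surjective (src n)

namespace BratteliDiagram

variable (B : BratteliDiagram)

/-- A vertex is a source if no edge has it as its target (in particular, every
level-0 vertex is a source). -/
def IsSource : (n : ℕ) → B.V n → Prop
  | 0, _ => True
  | n + 1, v => ¬ ∃ e : B.E n, B.tgt n e = v

/-- `B` has finitely many sources: beyond some level there are no sources. -/
def FinSources : Prop :=
  ∃ N : ℕ, ∀ n : ℕ, N < n → ∀ v : B.V n, ¬ B.IsSource n v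

/-- The type of finite paths in `B` starting at some source and ending at the
vertex `w` of level `k` (including the empty path when `w` itself is a source). -/
def PathEnd : (k : ℕ) → B.V k → Type
  | 0, w => PLift (B.IsSource 0 w)
  | k + 1, w =>
      PLift (B.IsSource (k + 1) w) ⊕
        Σ e : B.E k, PLift (B.tgt k e = w) × PathEnd k (B.src k e)

/-- `c_k = Σ_{v ∈ S(B)} |P(v, V_k)|`: the total number of finite paths from the
sources of `B` to level `k`. -/
noncomputable def pathCount (k : ℕ) : ℕ :=
  Nat.card (Σ w : B.V k, B.PathEnd k w)

/-- An infinite path of `B` starting at a source: `edge n _` is the edge from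
level `n` to level `n + 1` followed by the path (defined for `n ≥ start`). -/
structure InfPath where
  start : ℕ
  edge : ∀ n, start ≤ n → B.E n
  start_isSource : B.IsSource start (B.src start (edge start le_rfl))
  compat : ∀ n (h : start ≤ n),
    B.src (n + 1) (edge (n + 1) (h.trans (Nat.le_succ n))) = B.tgt n (edge n h)

variable {B}

/-- `x` and `y` both start at level at most `m` and their edges agree from
level `m` on (i.e. `x_n = y_n` for all paper-levels `n > m`). -/
def AgreesFrom (x y : B.InfPath) (m : ℕ) : Prop :=
  ∃ (hx : x.start ≤ m) (hy : y.start ≤ m),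
    ∀ n (h : m ≤ n), x.edge n (hx.trans h) = y.edge n (hy.trans h)

/-- Tail equivalence of infinite paths. -/
def TailEquiv (x y : B.InfPath) : Prop :=
  ∃ m : ℕ, AgreesFrom x y m

/-- `k(x,y)`: the least level from which the infinite paths `x` and `y` agree. -/
noncomputable def kIdx (x y : B.InfPath) : ℕ :=
  sInf {m : ℕ | AgreesFrom x y m}

/-- The length function associated with the Bratteli diagram `B`:
`ℓ(x,y) = c_{k(x,y)}` for `x ≠ y` and `ℓ(x,x) = 0`. -/
noncomputable def len (x y : B.InfPath) : ℕ :=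
  letI := Classical.dec (x = y)
  if x = y then 0 else B.pathCount (kIdx x y)

end BratteliDiagram

open Finset

theorem sum_inv_sq_le_sum_range_inv_sq_max {α : Type*} (s : Finset α) (v : α → ℕ) (K : ℕ)
    (hK : ∀ x ∈ s, K ≤ v x) (hsparse : ∀ j, #{x ∈ s | v x ≤ j} ≤ j) :
    ∑ x ∈ s, ((v x : ℝ))⁻¹ ^ 2 ≤ ∑ i ∈ range #s, ((max (i + 1) K : ℕ) : ℝ)⁻¹ ^ 2 := by
  classical
  induction s using Finset.induction_on_max_value v with
  | empty => simp
  | insert a s ha hmax ih =>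
    -- every element of `insert a s` has value at most `v a`, so sparsity forces `#s + 1 ≤ v a`
    have hcard : #s + 1 ≤ v a := by
      have h := hsparse (v a)
      rwa [filter_true_of_mem (by simpa using hmax), card_insert_of_notMem ha] at h
    have hterm : ((v a : ℝ))⁻¹ ^ 2 ≤ ((max (#s + 1) K : ℕ) : ℝ)⁻¹ ^ 2 := by
      have hle : max (#s + 1) K ≤ v a := max_le hcard (hK a (mem_insert_self a s))
      gcongr
    rw [sum_insert ha, card_insert_of_notMem ha, sum_range_succ, add_comm]
    refine add_le_add (ih (fun x hx => hK x (mem_insert_of_mem hx)) fun j => ?_) hterm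
    exact (card_le_card (filter_subset_filter _ (subset_insert a s))).trans (hsparse j)

theorem sum_range_inv_sq_max_le (K n : ℕ) (hK : 0 < K) :
    ∑ i ∈ range n, ((max (i + 1) K : ℕ) : ℝ)⁻¹ ^ 2 ≤ 2 / K := by
  have hKpos : (0 : ℝ) < K := by exact_mod_cast hK
  -- the first `K` terms equal `K⁻²`; the later ones telescope against `m⁻¹ - (m + 1)⁻¹`
  have hbound : ∀ m ≥ K, ∑ i ∈ range m, ((max (i + 1) K : ℕ) : ℝ)⁻¹ ^ 2 ≤ 2 / K - 1 / m := by
    refine Nat.le_induction ?_ fun m hKm ih => ?_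
    · rw [sum_congr rfl fun i hi => by rw [max_eq_right (mem_range.mp hi)], sum_const, card_range]
      have hK_inv : (K : ℝ) * ((K : ℝ))⁻¹ ^ 2 = 1 / K := by field_simp
      rw [nsmul_eq_mul, hK_inv]
      linarith [show (2 : ℝ) / K = 2 * (1 / K) by ring]
    · have hm : (0 : ℝ) < m := hKpos.trans_le (by exact_mod_cast hKm)
      rw [sum_range_succ, max_eq_left (by omega)]
      have hstep : ((m + 1 : ℕ) : ℝ)⁻¹ ^ 2 ≤ 1 / m - 1 / (m + 1 : ℕ) := by
        push_cast
        rw [div_sub_div _ _ hm.ne' (by positivity), inv_pow, ← one_div]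
        rw [div_le_div_iff₀ (by positivity) (by positivity)]
        nlinarith
      linarith
  calc ∑ i ∈ range n, ((max (i + 1) K : ℕ) : ℝ)⁻¹ ^ 2
      ≤ ∑ i ∈ range (max n K), ((max (i + 1) K : ℕ) : ℝ)⁻¹ ^ 2 :=
        sum_le_sum_of_subset_of_nonneg (range_subset_range.mpr (le_max_left n K))
          fun _ _ _ => by positivity
    _ ≤ 2 / K - 1 / (max n K : ℕ) := hbound _ (le_max_right n K)
    _ ≤ 2 / K := sub_le_self _ (by positivity)

open scoped ENNReal

theorem ENNReal.sum_inv_natCast_sq_eq_ofReal {α : Type*} (s : Finset α) (v : α → ℕ)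
    (hv : ∀ x ∈ s, 0 < v x) :
    ∑ x ∈ s, ((v x : ℝ≥0∞))⁻¹ ^ 2 = ENNReal.ofReal (∑ x ∈ s, ((v x : ℝ))⁻¹ ^ 2) := by
  rw [ENNReal.ofReal_sum_of_nonneg fun _ _ => by positivity]
  refine sum_congr rfl fun x hx => ?_
  rw [ENNReal.ofReal_pow (by positivity), ENNReal.ofReal_inv_of_pos (by exact_mod_cast hv x hx),
    ENNReal.ofReal_natCast]

namespace BratteliDiagram

attribute [instance] vFinite eFinite

variable {B : BratteliDiagram}

instance finite_pathEnd : ∀ (k : ℕ) (w : B.V k), Finite (B.PathEnd k w)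
  | 0, _ => inferInstanceAs (Finite (PLift _))
  | k + 1, _ =>
    have := fun e : B.E k => finite_pathEnd k (B.src k e)
    inferInstanceAs (Finite (_ ⊕ Σ _, _ × _))

/- A finite path is recovered from its start and its edges; these decoders make initial segments
of infinite paths comparable without reasoning about equalities of dependent pairs. -/
def PathEnd.start : ∀ {k : ℕ} {w : B.V k}, B.PathEnd k w → ℕ
  | 0, _, _ => 0
  | k + 1, _, Sum.inl _ => k + 1
  | _ + 1, _, Sum.inr ⟨_, _, q⟩ => q.start

def PathEnd.edge? : ∀ {k : ℕ} {w : B.V k}, B.PathEnd k w → (n : ℕ) → Option (B.E n)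
  | 0, _, _, _ => none
  | _ + 1, _, Sum.inl _, _ => none
  | k + 1, _, Sum.inr ⟨e, _, q⟩, n => if h : n = k then some (h ▸ e) else q.edge? n

namespace InfPath

theorem ext {x x' : B.InfPath} (hs : x.start = x'.start)
    (he : ∀ n (h : x.start ≤ n) (h' : x'.start ≤ n), x.edge n h = x'.edge n h') : x = x' := by
  obtain ⟨s, f, _, _⟩ := x
  obtain ⟨s', f', _, _⟩ := x'
  obtain rfl : s = s' := hs
  obtain rfl : f = f' := funext fun n => funext fun h => he n h h
  rfl

theorem isSource_of_start_eq (x : B.InfPath) {k : ℕ} (h : x.start = k) :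
    B.IsSource k (B.src k (x.edge k h.le)) := by
  subst h
  exact x.start_isSource

def prefixPath (x : B.InfPath) : ∀ (k : ℕ) (h : x.start ≤ k), B.PathEnd k (B.src k (x.edge k h))
  | 0, _ => PLift.up trivial
  | k + 1, h =>
    (if hk : x.start ≤ k then
      Sum.inr ⟨x.edge k hk, PLift.up (x.compat k hk).symm, x.prefixPath k hk⟩
    else
      Sum.inl (PLift.up (x.isSource_of_start_eq (le_antisymm h (not_le.mp hk)))) :
      PLift _ ⊕ Σ e : B.E k, PLift (B.tgt k e = _) × B.PathEnd k (B.src k e))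

theorem start_prefixPath (x : B.InfPath) :
    ∀ (k : ℕ) (h : x.start ≤ k), (x.prefixPath k h).start = x.start
  | 0, h => (Nat.le_zero.mp h).symm
  | k + 1, h => by
    by_cases hk : x.start ≤ k
    · rw [prefixPath, dif_pos hk]
      exact x.start_prefixPath k hk
    · rw [prefixPath, dif_neg hk]
      exact (le_antisymm h (not_le.mp hk)).symm

theorem edge?_prefixPath (x : B.InfPath) :
    ∀ (k : ℕ) (hk : x.start ≤ k) (n : ℕ) (hn : x.start ≤ n), n < k →
      (x.prefixPath k hk).edge? n = some (x.edge n hn)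
  | 0, _, _, _, h => absurd h (Nat.not_lt_zero _)
  | k + 1, _, n, hn, hnk => by
    have hxk : x.start ≤ k := hn.trans (Nat.le_of_lt_succ hnk)
    rw [prefixPath, dif_pos hxk]
    by_cases h : n = k
    · subst h
      simp only [PathEnd.edge?, dif_pos]
    · simp only [PathEnd.edge?, dif_neg h]
      exact x.edge?_prefixPath k hxk n hn (by omega)

def truncate (x : B.InfPath) (k : ℕ) (h : x.start ≤ k) : Σ w : B.V k, B.PathEnd k w :=
  ⟨_, x.prefixPath k h⟩

theorem eq_of_agreesFrom_of_truncate_eq {x x' : B.InfPath} {k : ℕ} (hxx' : AgreesFrom x x' k)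
    (hx : x.start ≤ k) (hx' : x'.start ≤ k) (hpre : x.truncate k hx = x'.truncate k hx') :
    x = x' := by
  obtain ⟨_, _, htail⟩ := hxx'
  refine ext ?_ fun n hn hn' => ?_
  · simpa only [truncate, start_prefixPath] using congrArg (fun p => p.2.start) hpre
  · rcases lt_or_ge n k with hnk | hkn
    · have h := congrArg (fun p => p.2.edge? n) hpre
      simp only [truncate, edge?_prefixPath _ _ _ _ hn hnk, edge?_prefixPath _ _ _ _ hn' hnk] at h
      exact Option.some.inj h
    · exact htail n hkn

end InfPath

namespace AgreesFrom

variable {x y z : B.InfPath} {m n : ℕ}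

theorem symm (h : AgreesFrom x y m) : AgreesFrom y x m :=
  let ⟨hx, hy, he⟩ := h
  ⟨hy, hx, fun n hn => (he n hn).symm⟩

theorem trans (hxy : AgreesFrom x y m) (hyz : AgreesFrom y z m) : AgreesFrom x z m :=
  let ⟨hx, _, he⟩ := hxy
  let ⟨_, hz, he'⟩ := hyz
  ⟨hx, hz, fun n hn => (he n hn).trans (he' n hn)⟩

theorem mono (h : AgreesFrom x y m) (hmn : m ≤ n) : AgreesFrom x y n :=
  let ⟨hx, hy, he⟩ := h
  ⟨hx.trans hmn, hy.trans hmn, fun p hp => he p (hmn.trans hp)⟩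

end AgreesFrom

theorem card_le_pathCount_of_agreesFrom {s : Finset B.InfPath} {y : B.InfPath} {k : ℕ}
    (hs : ∀ x ∈ s, AgreesFrom x y k) : #s ≤ B.pathCount k := by
  let f : s → Σ w : B.V k, B.PathEnd k w := fun x => x.1.truncate k (hs x.1 x.2).1
  have hf : Function.Injective f := fun x x' hxx' =>
    Subtype.ext <| InfPath.eq_of_agreesFrom_of_truncate_eq
      ((hs x.1 x.2).trans (hs x'.1 x'.2).symm) _ _ hxx'
  exact (Nat.card_eq_finsetCard s).symm.trans_le (Nat.card_le_card_of_injective f hf)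

theorem agreesFrom_kIdx {x y : B.InfPath} (h : TailEquiv x y) : AgreesFrom x y (kIdx x y) :=
  Nat.sInf_mem h

theorem len_self (y : B.InfPath) : len y y = 0 :=
  if_pos rfl

theorem len_of_ne {x y : B.InfPath} (h : x ≠ y) : len x y = B.pathCount (kIdx x y) :=
  if_neg h

theorem card_le_of_len_le {s : Finset B.InfPath} {y : B.InfPath} {j : ℕ}
    (hs : ∀ x ∈ s, TailEquiv x y ∧ x ≠ y) (hj : ∀ x ∈ s, len x y ≤ j) : #s ≤ j := by
  rcases s.eq_empty_or_nonempty with rfl | hne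
  · simp
  -- all paths of `s` agree with `y` from the largest of their levels `k(x, y)`
  obtain ⟨x₀, hx₀, hmax⟩ := s.exists_max_image (kIdx · y) hne
  calc #s ≤ B.pathCount (kIdx x₀ y) :=
        card_le_pathCount_of_agreesFrom fun x hx => (agreesFrom_kIdx (hs x hx).1).mono (hmax x hx)
    _ = len x₀ y := (len_of_ne (hs x₀ hx₀).2).symm
    _ ≤ j := hj x₀ hx₀

theorem sum_inv_len_sq_le {s : Finset B.InfPath} {y : B.InfPath} {K : ℕ} (hK : 0 < K)
    (hs : ∀ x ∈ s, TailEquiv x y ∧ K ≤ len x y) :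
    ∑ x ∈ s, ((len x y : ℝ))⁻¹ ^ 2 ≤ 2 / K := by
  have hne : ∀ x ∈ s, TailEquiv x y ∧ x ≠ y := fun x hx =>
    ⟨(hs x hx).1, by rintro rfl; simpa [len_self, hK.ne'] using (hs x hx).2⟩
  refine (sum_inv_sq_le_sum_range_inv_sq_max s (len · y) K (fun x hx => (hs x hx).2)
    fun j => card_le_of_len_le (fun x hx => hne x (mem_filter.mp hx).1)
      fun x hx => (mem_filter.mp hx).2).trans ?_
  exact sum_range_inv_sq_max_le K _ hK

end BratteliDiagram

open BratteliDiagram in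
theorem bratteliLen_uniform_tail_estimate_general (B : BratteliDiagram)
    (ε : ℝ) (hε : 0 < ε) :
    ∃ M : ℝ, 0 ≤ M ∧ ∀ y : B.InfPath,
      (∑' x : {x : B.InfPath // TailEquiv x y ∧ M < (len x y : ℝ)},
          ((len x.1 y : ℝ≥0∞))⁻¹ ^ 2) ≤ ENNReal.ofReal ε := by
  obtain ⟨K, hK⟩ := exists_nat_gt (2 / ε)
  have hKpos : 0 < K := by exact_mod_cast (div_pos two_pos hε).trans hK
  refine ⟨K, K.cast_nonneg, fun y => ?_⟩
  rw [ENNReal.tsum_eq_iSup_sum]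
  refine iSup_le fun F => ?_
  have hs : ∀ x ∈ F.map (.subtype _), TailEquiv x y ∧ K ≤ len x y := by
    simp only [mem_map, Function.Embedding.subtype_apply]
    rintro _ ⟨x, -, rfl⟩
    exact ⟨x.2.1, by exact_mod_cast x.2.2.le⟩
  have hKε : 2 / (K : ℝ) ≤ ε := by
    rw [div_le_iff₀ (by exact_mod_cast hKpos)]
    rw [div_lt_iff₀ hε] at hK
    linarith
  calc ∑ x ∈ F, ((len x.1 y : ℝ≥0∞))⁻¹ ^ 2
      = ENNReal.ofReal (∑ x ∈ F, ((len x.1 y : ℝ))⁻¹ ^ 2) :=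
        ENNReal.sum_inv_natCast_sq_eq_ofReal _ _ fun x _ =>
          hKpos.trans_le (by exact_mod_cast x.2.2.le)
    _ = ENNReal.ofReal (∑ x ∈ F.map (.subtype _), ((len x y : ℝ))⁻¹ ^ 2) := by
        rw [sum_map]
        rfl
    _ ≤ ENNReal.ofReal ε := ENNReal.ofReal_le_ofReal ((sum_inv_len_sq_le hKpos hs).trans hKε)

open BratteliDiagram in
/-- Uniform tail estimate (the quantitative heart of Theorem 4.8): for every `ε > 0`
there is `M ≥ 0` such that for every infinite path `y`, the sum of `ℓ(x,y)⁻²` over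
all `x` tail-equivalent to `y` with `ℓ(x,y) > M` is at most `ε`. -/
theorem bratteliLen_uniform_tail_estimate (B : BratteliDiagram) (hB : B.FinSources)
    (ε : ℝ) (hε : 0 < ε) :
    ∃ M : ℝ, 0 ≤ M ∧ ∀ y : B.InfPath,
      (∑' x : {x : B.InfPath // TailEquiv x y ∧ M < (len x y : ℝ)},
          ((len x.1 y : ℝ≥0∞))⁻¹ ^ 2) ≤ ENNReal.ofReal ε :=
  bratteliLen_uniform_tail_estimate_general B ε hε
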